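/- Let d be a prime, let t ≥ 1, let x_1, …, x_t be pairwise distinct nonzero elements of ZMod d, let f be a polynomial over ZMod d of degree at most t − 1, and let s_r = f(x_r) · ∏_{j ≠ r} x_j · (x_j − x_r)⁻¹ ∈ ZMod d be the shadows. Let S = ∑_{r=1}^{t} s_r ∈ ZMod d and consider the state ψ : ZMod d → ℂ with ψ(k) = (1/√d) e^{2πi S k / d}. Then the inverse quantum Fourier transform of ψ, defined by (QFT⁻¹ ψ)(l) = (1/√d) ∑_{k ∈ ZMod d} e^{-2πi k l / d} ψ(k), equals the indicator function of f(0): it takes value 1 at l = f(0) and 0 at every other l ∈ ZMod d. -/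

import Mathlib

/-!
The shadows are the Lagrange interpolation terms of `f` at the nodes `x r`, evaluated at `0`,
so their sum `S` is `f(0)`, since `deg f < t`. The accumulated state is the Fourier basis state
`k ↦ e^{2πi S k / d} / √d`, and by orthogonality of the characters `k ↦ e^{2πi a k / d}` of
`ZMod d` its inverse Fourier transform is the basis state `|S⟩`.
-/

open Polynomial Finset Complex Real

namespace Lagrange

variable {F ι : Type*} [Field F] [DecidableEq ι] {s : Finset ι} {v : ι → F}

theorem eval_zero_basis (i : ι) :
    (Lagrange.basis s v i).eval 0 = ∏ j ∈ s.erase i, v j * (v j - v i)⁻¹ := by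
  rw [Lagrange.basis, eval_prod]
  refine prod_congr rfl fun j _ => ?_
  rw [basisDivisor, eval_mul, eval_C, eval_sub, eval_X, eval_C, ← neg_sub (v j), inv_neg]
  ring

theorem eval_zero_eq_sum_eval_mul_prod {f : F[X]} (hvs : Set.InjOn v s)
    (hdeg : f.degree < #s) :
    f.eval 0 = ∑ i ∈ s, f.eval (v i) * ∏ j ∈ s.erase i, v j * (v j - v i)⁻¹ := by
  conv_lhs => rw [eq_interpolate hvs hdeg]
  simp only [interpolate_apply, eval_finsetSum, eval_mul, eval_C, eval_zero_basis]

end Lagrange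

namespace ZMod

variable {N : ℕ} [NeZero N]

theorem cexp_val_mul_val_eq_stdAddChar (a k : ZMod N) :
    Complex.exp (2 * π * I * (a.val : ℂ) * (k.val : ℂ) / N) = stdAddChar (a * k) := by
  have h := stdAddChar_coe (N := N) ((a.val * k.val : ℕ) : ℤ)
  push_cast at h
  simp only [natCast_zmod_val] at h
  rw [h, mul_assoc (2 * π * I)]

theorem sum_exp_neg_mul_exp (a l : ZMod N) :
    ∑ k : ZMod N, Complex.exp (-(2 * π * I * (k.val : ℂ) * (l.val : ℂ) / N)) *
        Complex.exp (2 * π * I * (a.val : ℂ) * (k.val : ℂ) / N) =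
      if l = a then (N : ℂ) else 0 := by
  have hterm : ∀ k : ZMod N,
      Complex.exp (-(2 * π * I * (k.val : ℂ) * (l.val : ℂ) / N)) *
        Complex.exp (2 * π * I * (a.val : ℂ) * (k.val : ℂ) / N) =
          stdAddChar (k * (a - l)) := by
    intro k
    rw [Complex.exp_neg, cexp_val_mul_val_eq_stdAddChar, cexp_val_mul_val_eq_stdAddChar,
      mul_comm a, ← add_sub_cancel (k * l) (k * a), AddChar.map_add_eq_mul, ← mul_sub]
    exact inv_mul_cancel_left₀ (Circle.coe_ne_zero _) _
  classical
  simp_rw [hterm, AddChar.sum_mulShift _ (isPrimitive_stdAddChar N), sub_eq_zero, card,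
    eq_comm (a := a), Nat.cast_ite, Nat.cast_zero]

theorem invFourier_fourierBasisState (a l : ZMod N) :
    (1 / Real.sqrt N : ℂ) * ∑ k : ZMod N,
        Complex.exp (-(2 * π * I * (k.val : ℂ) * (l.val : ℂ) / N)) *
          ((1 / Real.sqrt N : ℂ) * Complex.exp (2 * π * I * (a.val : ℂ) * (k.val : ℂ) / N)) =
      if l = a then 1 else 0 := by
  simp_rw [mul_left_comm _ (1 / Real.sqrt N : ℂ), ← mul_sum, sum_exp_neg_mul_exp, ← mul_assoc]
  have hsqrt : (1 / Real.sqrt N : ℂ) * (1 / Real.sqrt N) * N = 1 := by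
    rw [div_mul_div_comm, one_mul, ← ofReal_mul, Real.mul_self_sqrt (Nat.cast_nonneg N),
      ofReal_natCast, one_div_mul_cancel (NeZero.ne _)]
  rw [mul_ite, mul_zero, hsqrt]

end ZMod

theorem QFTinv_recovers_secret_general (d : ℕ) [Fact d.Prime] (t : ℕ) (ht : 1 ≤ t)
    (x : Fin t → ZMod d) (hx : Function.Injective x)
    (f : Polynomial (ZMod d)) (hf : f.natDegree ≤ t - 1)
    (s : Fin t → ZMod d)
    (hs : ∀ r, s r = f.eval (x r) * ∏ j ∈ Finset.univ.erase r, x j * (x j - x r)⁻¹)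
    (S : ZMod d) (hS : S = ∑ r : Fin t, s r)
    (ψ : ZMod d → ℂ)
    (hψ : ∀ k, ψ k = (1 / Real.sqrt d : ℂ) *
      Complex.exp (2 * π * I * (S.val : ℂ) * (k.val : ℂ) / d)) :
    (fun l => (1 / Real.sqrt d : ℂ) *
        ∑ k : ZMod d,
          Complex.exp (-(2 * π * I * (k.val : ℂ) * (l.val : ℂ) / d)) * ψ k) =
      fun l => if l = f.eval 0 then (1 : ℂ) else 0 := by
  have hdeg : f.degree < #(univ : Finset (Fin t)) := by
    rw [card_univ, Fintype.card_fin]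
    exact (degree_le_natDegree).trans_lt (by exact_mod_cast (by omega : f.natDegree < t))
  have hSf : S = f.eval 0 := by
    rw [Lagrange.eval_zero_eq_sum_eval_mul_prod hx.injOn hdeg, hS]
    exact sum_congr rfl fun r _ => hs r
  funext l
  simp_rw [hψ, ZMod.invFourier_fourierBasisState, hSf]

/-- Lemma 1 of the paper (correctness of Step 9): applying the inverse quantum
Fourier transform to the accumulated state `ψ k = (1/√d) e^{2πi S k / d}`,
where `S` is the sum of the shadows, yields the basis state `|f(0)⟩`
(the indicator function of the secret `f(0)`). -/
theorem QFTinv_recovers_secret (d : ℕ) [Fact d.Prime] (t : ℕ) (ht : 1 ≤ t)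
    (x : Fin t → ZMod d) (hx : Function.Injective x) (hx0 : ∀ r, x r ≠ 0)
    (f : Polynomial (ZMod d)) (hf : f.natDegree ≤ t - 1)
    (s : Fin t → ZMod d)
    (hs : ∀ r, s r = f.eval (x r) * ∏ j ∈ Finset.univ.erase r, x j * (x j - x r)⁻¹)
    (S : ZMod d) (hS : S = ∑ r : Fin t, s r)
    (ψ : ZMod d → ℂ)
    (hψ : ∀ k, ψ k = (1 / Real.sqrt d : ℂ) *
      Complex.exp (2 * π * I * (S.val : ℂ) * (k.val : ℂ) / d)) :
    (fun l => (1 / Real.sqrt d : ℂ) *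
        ∑ k : ZMod d,
          Complex.exp (-(2 * π * I * (k.val : ℂ) * (l.val : ℂ) / d)) * ψ k) =
      fun l => if l = f.eval 0 then (1 : ℂ) else 0 :=
  QFTinv_recovers_secret_general d t ht x hx f hf s hs S hS ψ hψ
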